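/- arXiv:0903.3485 — 6 statements merged into one kernel-verified Lean document; each statement's English description precedes it below -/
import Mathlib

section
/- Let U ⊆ ℂ be a connected open set and k : U → ℂ holomorphic. If n₁ and n₂ are two smooth positive solutions of ∂n/∂z = n·k on U, then n₁/n₂ is constant. -/
/-- The Wirtinger derivative `∂f/∂z = (1/2)(∂f/∂x − i ∂f/∂y)` of a map `f : ℂ → ℂ`. -/
noncomputable def wirtingerDeriv (f : ℂ → ℂ) (z : ℂ) : ℂ :=
  (1 / 2 : ℂ) * (fderiv ℝ f z 1 - Complex.I * fderiv ℝ f z Complex.I)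

/-- A real function on an open preconnected subset of `ℂ` with vanishing derivative
is constant there. -/
lemma const_of_hasFDerivAt_zero {f : ℂ → ℝ} {U : Set ℂ} (hU : IsOpen U)
    (hc : IsPreconnected U) (hd : ∀ z ∈ U, HasFDerivAt f (0 : ℂ →L[ℝ] ℝ) z)
    {x y : ℂ} (hx : x ∈ U) (hy : y ∈ U) : f x = f y := by
  -- local constancy on balls inside U
  have loc : ∀ z ∈ U, ∃ ε > 0, Metric.ball z ε ⊆ U ∧ ∀ w ∈ Metric.ball z ε, f w = f z := by
    intro z hz
    obtain ⟨ε, εpos, hball⟩ := Metric.isOpen_iff.1 hU z hz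
    refine ⟨ε, εpos, hball, fun w hw => ?_⟩
    refine (convex_ball z ε).is_const_of_fderivWithin_eq_zero
      (fun u hu => ((hd u (hball hu)).differentiableAt).differentiableWithinAt)
      (fun u hu => ?_) hw (Metric.mem_ball_self εpos)
    exact ((hd u (hball hu)).hasFDerivWithinAt).fderivWithin
      (Metric.isOpen_ball.uniqueDiffWithinAt hu)
  by_contra hne
  set A : Set ℂ := {z | z ∈ U ∧ f z = f y} with hA
  set B : Set ℂ := {z | z ∈ U ∧ f z ≠ f y} with hB
  have hAopen : IsOpen A := by
    rw [Metric.isOpen_iff]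
    rintro z ⟨hzU, hzf⟩
    obtain ⟨ε, εpos, hsub, hconst⟩ := loc z hzU
    exact ⟨ε, εpos, fun w hw => ⟨hsub hw, (hconst w hw).trans hzf⟩⟩
  have hBopen : IsOpen B := by
    rw [Metric.isOpen_iff]
    rintro z ⟨hzU, hzf⟩
    obtain ⟨ε, εpos, hsub, hconst⟩ := loc z hzU
    exact ⟨ε, εpos, fun w hw => ⟨hsub hw, by rw [hconst w hw]; exact hzf⟩⟩
  have hcover : U ⊆ A ∪ B := by
    intro z hz
    by_cases h : f z = f y
    · exact Or.inl ⟨hz, h⟩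
    · exact Or.inr ⟨hz, h⟩
  obtain ⟨w, -, hwA, hwB⟩ := hc A B hAopen hBopen hcover ⟨y, hy, hy, rfl⟩ ⟨x, hx, hx, hne⟩
  exact hwB.2 hwA.2

/-- Two smooth positive solutions of `∂n/∂z = n·k` on a connected open set `U ⊆ ℂ`
differ by a positive multiplicative constant. -/
theorem solutions_differ_by_constant (U : Set ℂ) (hU : IsOpen U) (hconn : IsConnected U)
    (k : ℂ → ℂ) (hk : DifferentiableOn ℂ k U)
    (n₁ n₂ : ℂ → ℝ)
    (hn₁ : ContDiffOn ℝ (⊤ : ℕ∞) n₁ U) (hn₂ : ContDiffOn ℝ (⊤ : ℕ∞) n₂ U)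
    (hpos₁ : ∀ z ∈ U, 0 < n₁ z) (hpos₂ : ∀ z ∈ U, 0 < n₂ z)
    (heq₁ : ∀ z ∈ U, wirtingerDeriv (fun w => (n₁ w : ℂ)) z = (n₁ z : ℂ) * k z)
    (heq₂ : ∀ z ∈ U, wirtingerDeriv (fun w => (n₂ w : ℂ)) z = (n₂ z : ℂ) * k z) :
    ∃ c : ℝ, 0 < c ∧ ∀ z ∈ U, n₁ z = c * n₂ z := by
  -- differentiability of n₁ and n₂ at points of U
  have hd₁ : ∀ z ∈ U, DifferentiableAt ℝ n₁ z := fun z hz =>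
    (hn₁.contDiffAt (hU.mem_nhds hz)).differentiableAt (by simp)
  have hd₂ : ∀ z ∈ U, DifferentiableAt ℝ n₂ z := fun z hz =>
    (hn₂.contDiffAt (hU.mem_nhds hz)).differentiableAt (by simp)
  -- the key pointwise relation between the real derivatives
  have key : ∀ z ∈ U, ∀ v : ℂ,
      n₂ z * fderiv ℝ n₁ z v = n₁ z * fderiv ℝ n₂ z v := by
    intro z hz v
    set D₁ := fderiv ℝ n₁ z with hD₁
    set D₂ := fderiv ℝ n₂ z with hD₂
    have H₁ : HasFDerivAt (fun w => ((n₁ w : ℂ)))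
        (Complex.ofRealCLM.comp D₁) z :=
      Complex.ofRealCLM.hasFDerivAt.comp z (hd₁ z hz).hasFDerivAt
    have H₂ : HasFDerivAt (fun w => ((n₂ w : ℂ)))
        (Complex.ofRealCLM.comp D₂) z :=
      Complex.ofRealCLM.hasFDerivAt.comp z (hd₂ z hz).hasFDerivAt
    have E₁ : (1 / 2 : ℂ) * ((D₁ 1 : ℂ) - Complex.I * (D₁ Complex.I : ℂ))
        = (n₁ z : ℂ) * k z := by
      have := heq₁ z hz
      rwa [wirtingerDeriv, H₁.fderiv] at this
    have E₂ : (1 / 2 : ℂ) * ((D₂ 1 : ℂ) - Complex.I * (D₂ Complex.I : ℂ))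
        = (n₂ z : ℂ) * k z := by
      have := heq₂ z hz
      rwa [wirtingerDeriv, H₂.fderiv] at this
    -- extract real and imaginary parts
    have e₁r := congrArg Complex.re E₁
    have e₁i := congrArg Complex.im E₁
    have e₂r := congrArg Complex.re E₂
    have e₂i := congrArg Complex.im E₂
    simp [Complex.mul_re, Complex.mul_im] at e₁r e₁i e₂r e₂i
    -- relations at the basis vectors 1 and I
    have h1 : n₂ z * D₁ 1 = n₁ z * D₂ 1 := by linear_combination 2 * n₂ z * e₁r - 2 * n₁ z * e₂r
    have hI : n₂ z * D₁ Complex.I = n₁ z * D₂ Complex.I := by linear_combination (-2 * n₂ z) * e₁i + 2 * n₁ z * e₂i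
    -- decompose v over the basis {1, I}
    have hv : v = v.re • (1 : ℂ) + v.im • Complex.I := by
      simp [Complex.real_smul, Complex.re_add_im]
    rw [hv, map_add, map_add, map_smul, map_smul, map_smul, map_smul,
      smul_eq_mul, smul_eq_mul, smul_eq_mul, smul_eq_mul]
    linear_combination v.re * h1 + v.im * hI
  -- the ratio g = n₁ / n₂ has vanishing derivative on U
  set g : ℂ → ℝ := fun w => n₁ w / n₂ w with hg
  have hgderiv : ∀ z ∈ U, HasFDerivAt g (0 : ℂ →L[ℝ] ℝ) z := by
    intro z hz
    have hne : n₂ z ≠ 0 := (hpos₂ z hz).ne'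
    have Hinv : HasFDerivAt (fun w => (n₂ w)⁻¹)
        ((-(n₂ z ^ 2)⁻¹) • fderiv ℝ n₂ z) z :=
      (hasDerivAt_inv hne).comp_hasFDerivAt z (hd₂ z hz).hasFDerivAt
    have Hmul : HasFDerivAt (fun w => n₁ w * (n₂ w)⁻¹)
        (n₁ z • ((-(n₂ z ^ 2)⁻¹) • fderiv ℝ n₂ z) + (n₂ z)⁻¹ • fderiv ℝ n₁ z) z :=
      (hd₁ z hz).hasFDerivAt.mul Hinv
    have hgeq : g = fun w => n₁ w * (n₂ w)⁻¹ := by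
      funext w; simp [hg, div_eq_mul_inv]
    rw [hgeq]
    convert Hmul using 1
    ext v
    simp only [ContinuousLinearMap.add_apply, ContinuousLinearMap.coe_smul',
      Pi.smul_apply, smul_eq_mul, ContinuousLinearMap.zero_apply]
    have hk := key z hz v
    field_simp
    linear_combination (-1 : ℝ) * hk
  -- conclude: g is constant on U
  obtain ⟨z₀, hz₀⟩ := hconn.nonempty
  refine ⟨n₁ z₀ / n₂ z₀, div_pos (hpos₁ z₀ hz₀) (hpos₂ z₀ hz₀), fun z hz => ?_⟩
  have hgz : g z = g z₀ :=
    const_of_hasFDerivAt_zero hU hconn.isPreconnected hgderiv hz hz₀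
  have hne : n₂ z ≠ 0 := (hpos₂ z hz).ne'
  have : n₁ z / n₂ z = n₁ z₀ / n₂ z₀ := hgz
  field_simp at this ⊢
  linarith [this]
end

section
/- Let S̃ ⊆ ℂ be open, K holomorphic on S̃, and σ : [0,ε) → S̃ a C¹ curve. Then σ satisfies σ'(t) = exp(−K(σ(t)))·exp(K(σ(0)))·σ'(0) for all t if and only if J(σ(t)) = exp(K(σ(0)))·σ'(0)·t + J(σ(0)) for all t, where J is any holomorphic primitive of exp(K) on S̃. -/
/-!
Along the curve, `(J ∘ σ)' = σ' · exp (K ∘ σ)`, so the velocity equation says exactly that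
`J ∘ σ` has the constant derivative `exp (K (σ 0)) · σ' 0`. On an interval, having a constant
derivative `c` is the same as being affine with slope `c`: one direction is the mean value
theorem, the other is uniqueness of one-sided derivatives on `[0, ε)`.
-/

open Set

theorem hasDerivAt_affine {E : Type*} [NormedAddCommGroup E] [NormedSpace ℝ E]
    (a : ℝ) (x₀ c : E) (t : ℝ) : HasDerivAt (fun u : ℝ => x₀ + (u - a) • c) c t := by
  simpa using (((hasDerivAt_id t).sub_const a).smul_const c).const_add x₀

theorem forall_hasDerivAt_eq_iff_eq_affine {E : Type*} [NormedAddCommGroup E] [NormedSpace ℝ E]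
    {f f' : ℝ → E} {a b : ℝ} (hf : ∀ t ∈ Ico a b, HasDerivAt f (f' t) t) (c : E) :
    (∀ t ∈ Ico a b, f' t = c) ↔ ∀ t ∈ Ico a b, f t = f a + (t - a) • c := by
  have hg := hasDerivAt_affine a (f a) c
  constructor
  · intro hc t ht
    have hsub : Icc a t ⊆ Ico a b := Icc_subset_Ico_right ht.2
    refine eq_of_has_deriv_right_eq (f' := fun _ => c)
      (fun x hx => hc x (hsub (Ico_subset_Icc_self hx)) ▸
        (hf x (hsub (Ico_subset_Icc_self hx))).hasDerivWithinAt)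
      (fun x _ => (hg x).hasDerivWithinAt)
      (fun x hx => (hf x (hsub hx)).continuousAt.continuousWithinAt)
      (fun x _ => (hg x).continuousAt.continuousWithinAt)
      (by simp) t (right_mem_Icc.2 ht.1)
  · intro haff t ht
    exact (uniqueDiffOn_Ico a b t ht).eq_deriv _ (hf t ht).hasDerivWithinAt
      ((hg t).hasDerivWithinAt.congr haff (haff t ht))

theorem eq_exp_neg_mul_iff_mul_exp_eq (z w c : ℂ) :
    z = Complex.exp (-w) * c ↔ z * Complex.exp w = c := by
  rw [Complex.exp_neg, inv_mul_eq_div, eq_div_iff (Complex.exp_ne_zero w)]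

theorem geodesic_velocity_iff_affine_general (S : Set ℂ)
    (K J : ℂ → ℂ)
    (hJ : ∀ z ∈ S, HasDerivAt J (Complex.exp (K z)) z)
    (ε : ℝ)
    (σ σ' : ℝ → ℂ)
    (hmem : ∀ t ∈ Set.Ico 0 ε, σ t ∈ S)
    (hσ : ∀ t ∈ Set.Ico 0 ε, HasDerivAt σ (σ' t) t) :
    (∀ t ∈ Set.Ico 0 ε,
        σ' t = Complex.exp (-(K (σ t))) * Complex.exp (K (σ 0)) * σ' 0) ↔
      (∀ t ∈ Set.Ico 0 ε,
        J (σ t) = Complex.exp (K (σ 0)) * σ' 0 * t + J (σ 0)) := by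
  have hJσ : ∀ t ∈ Ico 0 ε,
      HasDerivAt (fun u => J (σ u)) (σ' t * Complex.exp (K (σ t))) t :=
    fun t ht => (hJ _ (hmem t ht)).scomp t (hσ t ht)
  have key := forall_hasDerivAt_eq_iff_eq_affine hJσ (Complex.exp (K (σ 0)) * σ' 0)
  simp only [sub_zero, Complex.real_smul] at key
  refine Iff.trans (forall₂_congr fun t _ => ?_) (key.trans (forall₂_congr fun t _ => ?_))
  · rw [mul_assoc, eq_exp_neg_mul_iff_mul_exp_eq]
  · rw [add_comm, mul_comm (t : ℂ)]

/-- Let `S̃ ⊆ ℂ` be open, `K` holomorphic on `S̃`, and `J` a holomorphic primitive of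
`exp K` on `S̃`. A `C¹` curve `σ : [0,ε) → S̃` satisfies
`σ'(t) = exp(−K(σ(t)))·exp(K(σ(0)))·σ'(0)` for all `t` if and only if
`J(σ(t)) = exp(K(σ(0)))·σ'(0)·t + J(σ(0))` for all `t`. -/
theorem geodesic_velocity_iff_affine (S : Set ℂ) (hS : IsOpen S)
    (K J : ℂ → ℂ) (hK : DifferentiableOn ℂ K S)
    (hJ : ∀ z ∈ S, HasDerivAt J (Complex.exp (K z)) z)
    (ε : ℝ) (hε : 0 < ε)
    (σ σ' : ℝ → ℂ)
    (hmem : ∀ t ∈ Set.Ico 0 ε, σ t ∈ S)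
    (hσ : ∀ t ∈ Set.Ico 0 ε, HasDerivAt σ (σ' t) t)
    (hcont : ContinuousOn σ' (Set.Ico 0 ε)) :
    (∀ t ∈ Set.Ico 0 ε,
        σ' t = Complex.exp (-(K (σ t))) * Complex.exp (K (σ 0)) * σ' 0) ↔
      (∀ t ∈ Set.Ico 0 ε,
        J (σ t) = Complex.exp (K (σ 0)) * σ' 0 * t + J (σ 0)) :=
  geodesic_velocity_iff_affine_general S K J hJ ε σ σ' hmem hσ
end

section
/- Consider the planar system z' = z^{μ} v, v' = −ρ z^{μ−1} v² with μ ≥ 1 an integer and ρ ∈ ℂ, ρ ≠ μ−1. Set μ_Y = μ−1 and c = (ρ−μ_Y) z₀^{μ_Y} v₀. Then the solution with initial data (z₀, v₀), z₀, v₀ ≠ 0, is z(t) = z₀·exp((1/(ρ−μ_Y))·Log(1+ct)) and v(t) = v₀·exp((−ρ/(ρ−μ_Y))·Log(1+ct)), using the principal branch of the logarithm, for all t with 1+ct in the slit plane ℂ \ ℝ⁻. -/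
/-!
Write `L = Log(1 + c t)` and `d = ρ - (μ - 1)`. On the slit plane `exp(k L)` behaves like the
power `(1 + c t)^k`: its derivative is `k c exp((k - 1) L)`, and products and powers of such
terms add exponents. So both sides of each equation are multiples of a single exponential; for
`z` the exponents agree as `d⁻¹ - 1 = μ d⁻¹ - ρ/d`, for `v` as `-ρ/d - 1 = (μ - 1) d⁻¹ - 2ρ/d`,
and the constants agree because `c = d z₀^(μ-1) v₀`.
-/

open Complex

theorem hasDerivAt_const_mul_cexp_mul_log_one_add {c : ℂ} {t : ℝ} (C k : ℂ)
    (ht : 1 + c * t ∈ slitPlane) :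
    HasDerivAt (fun s : ℝ => C * exp (k * log (1 + c * s)))
      (C * k * c * exp ((k - 1) * log (1 + c * t))) t := by
  have hline : HasDerivAt (fun s : ℝ => 1 + c * (s : ℂ)) c t := by
    simpa using (ofRealCLM.hasDerivAt (x := t)).const_mul c |>.const_add 1
  have hexp_pred :
      exp ((k - 1) * log (1 + c * t)) = exp (k * log (1 + c * t)) * (1 + c * t)⁻¹ := by
    rw [sub_one_mul, exp_sub, exp_log (slitPlane_ne_zero ht), div_eq_mul_inv]
  have hlog := (hasDerivAt_log ht).comp t hline
  simp only [Function.comp_def] at hlog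
  rw [hexp_pred]
  exact ((hlog.const_mul k).cexp.const_mul C).congr_deriv (by ring)

theorem const_mul_cexp_mul_pow (C a L : ℂ) (n : ℕ) :
    (C * exp (a * L)) ^ n = C ^ n * exp (n * a * L) := by
  rw [mul_pow, mul_assoc, exp_nat_mul]

theorem fuchsian_normal_form_solution_general (μ : ℕ) (hμ : 1 ≤ μ) (ρ : ℂ)
    (hρ : ρ ≠ (μ : ℂ) - 1)
    (z₀ v₀ : ℂ)
    (c : ℂ) (hc : c = (ρ - ((μ : ℂ) - 1)) * z₀ ^ (μ - 1) * v₀)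
    (z v : ℝ → ℂ)
    (hz : z = fun t : ℝ =>
      z₀ * Complex.exp ((ρ - ((μ : ℂ) - 1))⁻¹ * Complex.log (1 + c * t)))
    (hv : v = fun t : ℝ =>
      v₀ * Complex.exp ((-ρ / (ρ - ((μ : ℂ) - 1))) * Complex.log (1 + c * t))) :
    z 0 = z₀ ∧ v 0 = v₀ ∧
    ∀ t : ℝ, (1 + c * t) ∈ Complex.slitPlane →
      HasDerivAt z ((z t) ^ μ * v t) t ∧
      HasDerivAt v (-ρ * (z t) ^ (μ - 1) * (v t) ^ 2) t := by
  set d := ρ - ((μ : ℂ) - 1)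
  have hd : d ≠ 0 := sub_ne_zero.mpr hρ
  refine ⟨by simp [hz], by simp [hv], fun t ht => ?_⟩
  set L := log (1 + c * t)
  subst hz hv
  constructor
  · convert hasDerivAt_const_mul_cexp_mul_log_one_add z₀ d⁻¹ ht using 1
    calc (z₀ * exp (d⁻¹ * L)) ^ μ * (v₀ * exp (-ρ / d * L))
        = z₀ ^ μ * v₀ * exp ((μ * d⁻¹ + -ρ / d) * L) := by
          rw [const_mul_cexp_mul_pow, add_mul, exp_add]; ring
      _ = z₀ * d⁻¹ * c * exp ((d⁻¹ - 1) * L) := by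
          congr 1
          · rw [hc, ← pow_sub_one_mul (by omega : μ ≠ 0)]; field_simp
          · congr 2; field_simp; ring
  · convert hasDerivAt_const_mul_cexp_mul_log_one_add v₀ (-ρ / d) ht using 1
    calc -ρ * (z₀ * exp (d⁻¹ * L)) ^ (μ - 1) * (v₀ * exp (-ρ / d * L)) ^ 2
        = -ρ * z₀ ^ (μ - 1) * v₀ ^ 2 * exp ((((μ : ℂ) - 1) * d⁻¹ + 2 * (-ρ / d)) * L) := by
          rw [const_mul_cexp_mul_pow, const_mul_cexp_mul_pow, add_mul, exp_add]
          push_cast [Nat.cast_sub hμ]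
          ring
      _ = v₀ * (-ρ / d) * c * exp ((-ρ / d - 1) * L) := by
          congr 1
          · rw [hc]; field_simp
          · congr 2; field_simp; ring

/-- Normal-form geodesic flow near a Fuchsian singularity of order `μ`: with
`μ_Y = μ−1`, `ρ ≠ μ_Y` and `c = (ρ−μ_Y) z₀^{μ_Y} v₀`, the curves
`z(t) = z₀·exp((ρ−μ_Y)⁻¹·Log(1+ct))` and `v(t) = v₀·exp((−ρ/(ρ−μ_Y))·Log(1+ct))`
(principal logarithm) solve `z' = z^μ v`, `v' = −ρ z^{μ−1} v²` with initial data
`(z₀, v₀)`, for all `t` with `1+ct` in the slit plane `ℂ ∖ ℝ⁻`. -/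
theorem fuchsian_normal_form_solution (μ : ℕ) (hμ : 1 ≤ μ) (ρ : ℂ)
    (hρ : ρ ≠ (μ : ℂ) - 1)
    (z₀ v₀ : ℂ) (hz₀ : z₀ ≠ 0) (hv₀ : v₀ ≠ 0)
    (c : ℂ) (hc : c = (ρ - ((μ : ℂ) - 1)) * z₀ ^ (μ - 1) * v₀)
    (z v : ℝ → ℂ)
    (hz : z = fun t : ℝ =>
      z₀ * Complex.exp ((ρ - ((μ : ℂ) - 1))⁻¹ * Complex.log (1 + c * t)))
    (hv : v = fun t : ℝ =>
      v₀ * Complex.exp ((-ρ / (ρ - ((μ : ℂ) - 1))) * Complex.log (1 + c * t))) :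
    z 0 = z₀ ∧ v 0 = v₀ ∧
    ∀ t : ℝ, (1 + c * t) ∈ Complex.slitPlane →
      HasDerivAt z ((z t) ^ μ * v t) t ∧
      HasDerivAt v (-ρ * (z t) ^ (μ - 1) * (v t) ^ 2) t :=
  fuchsian_normal_form_solution_general μ hμ ρ hρ z₀ v₀ c hc z v hz hv
end

section
/- Consider the system z' = z^μ v, v' = 0 with integer μ > 1 and initial data z₀, v₀ ∈ ℂ*. The solution is v(t) ≡ v₀ and z(t) = z₀ (1 − (μ−1) v₀ z₀^{μ−1} t)^{−1/(μ−1)} (branch chosen so z(0) = z₀); in particular z(t) → 0 as t → +∞ if and only if v₀ z₀^{μ−1} ∉ ℝ⁺. -/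
/-!
Along a solution `v` is constant, so `z ^ (-(μ - 1)) + (μ - 1) v₀ t` has zero derivative and is a
first integral; clearing denominators gives the closed form. If the solution lives on all of
`[0, ∞)`, the factor `1 - (μ - 1) v₀ z₀ ^ (μ - 1) t` cannot vanish there, which excludes
`v₀ z₀ ^ (μ - 1) > 0`, while `‖z t‖ ^ (μ - 1) = ‖z₀‖ ^ (μ - 1) / ‖1 - (μ - 1) v₀ z₀ ^ (μ - 1) t‖ → 0`.
So both sides of the equivalence hold.
-/

open Filter Topology

theorem Set.OrdConnected.eq_of_hasDerivAt_zero {E : Type*} [NormedAddCommGroup E]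
    [NormedSpace ℝ E] {s : Set ℝ} (hs : s.OrdConnected) {f : ℝ → E}
    (hf : ∀ t ∈ s, HasDerivAt f 0 t) {x y : ℝ} (hx : x ∈ s) (hy : y ∈ s) : f x = f y := by
  have := hs.convex.norm_image_sub_le_of_norm_hasDerivWithin_le
    (fun t ht => (hf t ht).hasDerivWithinAt) (fun _ _ => norm_zero.le) hx hy
  rwa [zero_mul, norm_sub_rev, norm_le_zero_iff, sub_eq_zero] at this

theorem hasDerivAt_zpow_neg_add_mul_of_hasDerivAt {z : ℝ → ℂ} {c : ℂ} {m : ℕ} {t : ℝ}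
    (hz : HasDerivAt z (z t ^ (m + 1) * c) t) (hzt : z t ≠ 0) :
    HasDerivAt (fun s => z s ^ (-(m : ℤ)) + m * c * s) 0 t := by
  have hpow := (hasDerivAt_zpow (-(m : ℤ)) (z t) (Or.inl hzt)).comp t hz
  have hlin := ((hasDerivAt_id t).ofReal_comp).const_mul ((m : ℂ) * c)
  refine (hpow.add hlin).congr_deriv ?_
  rw [zpow_sub_one₀ hzt, zpow_neg, zpow_natCast]
  field_simp
  push_cast
  ring

theorem pow_mul_one_sub_eq_of_hasDerivAt {s : Set ℝ} (hs : s.OrdConnected) (h0 : (0 : ℝ) ∈ s)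
    {z : ℝ → ℂ} {c : ℂ} {m : ℕ} (hz : ∀ t ∈ s, HasDerivAt z (z t ^ (m + 1) * c) t)
    (hz_ne : ∀ t ∈ s, z t ≠ 0) {t : ℝ} (ht : t ∈ s) :
    z t ^ m * (1 - m * c * z 0 ^ m * t) = z 0 ^ m := by
  have hconst := hs.eq_of_hasDerivAt_zero
    (fun t ht => hasDerivAt_zpow_neg_add_mul_of_hasDerivAt (hz t ht) (hz_ne t ht)) ht h0
  have hzt := pow_ne_zero m (hz_ne t ht)
  have hz0 := pow_ne_zero m (hz_ne 0 h0)
  simp only [zpow_neg, zpow_natCast, Complex.ofReal_zero, mul_zero, add_zero] at hconst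
  field_simp at hconst
  linear_combination -hconst

theorem tendsto_norm_one_sub_mul_atTop {b : ℂ} (hb : b ≠ 0) :
    Tendsto (fun t : ℝ => ‖1 - b * t‖) atTop atTop := by
  refine tendsto_atTop_mono' _ ?_
    ((tendsto_id.const_mul_atTop (norm_pos_iff.2 hb)).atTop_add (tendsto_const_nhds (x := -1)))
  filter_upwards [eventually_ge_atTop 0] with t ht
  calc ‖b‖ * id t + -1 = ‖b * t‖ - ‖(1 : ℂ)‖ := by simp [abs_of_nonneg ht, sub_eq_add_neg]
    _ ≤ ‖1 - b * t‖ := by rw [norm_sub_rev]; exact norm_sub_norm_le _ _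

theorem tendsto_zero_of_pow_mul_one_sub_mul_eq {w : ℝ → ℂ} {b C : ℂ} {m : ℕ} (hm : m ≠ 0)
    (hb : b ≠ 0) (h : ∀ᶠ t in atTop, w t ^ m * (1 - b * t) = C) : Tendsto w atTop (𝓝 0) := by
  have hden := tendsto_norm_one_sub_mul_atTop hb
  have hpow : Tendsto (fun t => ‖w t‖ ^ m) atTop (𝓝 0) := by
    refine ((tendsto_const_nhds (x := ‖C‖)).div_atTop hden).congr' ?_
    filter_upwards [h, hden.eventually_gt_atTop 0] with t ht hpos
    rw [← ht, norm_mul, norm_pow, mul_div_cancel_right₀ _ hpos.ne']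
  have hroot := hpow.rpow_const (p := (m : ℝ)⁻¹) (Or.inr (by positivity))
  rw [Real.zero_rpow (by positivity)] at hroot
  refine tendsto_zero_iff_norm_tendsto_zero.2 (hroot.congr fun t => ?_)
  exact Real.pow_rpow_inv_natCast (norm_nonneg _) hm

theorem not_exists_pos_of_pow_mul_one_sub_mul_eq {w : ℝ → ℂ} {b C : ℂ} {m : ℕ} (hC : C ≠ 0)
    (h : ∀ t : ℝ, 0 ≤ t → w t ^ m * (1 - b * t) = C) : ¬∃ c : ℝ, 0 < c ∧ b = c := by
  rintro ⟨c, hc, rfl⟩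
  have := h c⁻¹ (inv_nonneg.2 hc.le)
  rw [Complex.ofReal_inv, mul_inv_cancel₀ (Complex.ofReal_ne_zero.2 hc.ne'), sub_self,
    mul_zero] at this
  exact hC this.symm

theorem apparent_singularity_order_gt_one_general (μ : ℕ) (hμ : 1 < μ)
    (z₀ v₀ : ℂ) (hz₀ : z₀ ≠ 0) (hv₀ : v₀ ≠ 0)
    (I : Set ℝ) (hIconn : I.OrdConnected) (h0I : (0:ℝ) ∈ I)
    (z v : ℝ → ℂ) (hz0 : z 0 = z₀) (hv0 : v 0 = v₀)
    (hzne : ∀ t ∈ I, z t ≠ 0)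
    (hodez : ∀ t ∈ I, HasDerivAt z ((z t) ^ μ * v t) t)
    (hodev : ∀ t ∈ I, HasDerivAt v 0 t) :
    (∀ t ∈ I, v t = v₀) ∧
    (∀ t ∈ I, (z t) ^ (μ - 1) * (1 - (μ - 1 : ℂ) * v₀ * z₀ ^ (μ - 1) * t)
        = z₀ ^ (μ - 1)) ∧
    (Set.Ici (0:ℝ) ⊆ I →
      (Filter.Tendsto z Filter.atTop (nhds 0) ↔
        ¬∃ c : ℝ, 0 < c ∧ v₀ * z₀ ^ (μ - 1) = (c : ℂ))) := by
  obtain ⟨m, rfl⟩ : ∃ m, μ = m + 1 := ⟨μ - 1, by omega⟩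
  have hm : 0 < m := by omega
  have hv : ∀ t ∈ I, v t = v₀ := fun t ht => hv0 ▸ hIconn.eq_of_hasDerivAt_zero hodev ht h0I
  have hclosed : ∀ t ∈ I, z t ^ m * (1 - m * v₀ * z₀ ^ m * t) = z₀ ^ m := fun t ht =>
    hz0 ▸ pow_mul_one_sub_eq_of_hasDerivAt hIconn h0I (fun t ht => hv t ht ▸ hodez t ht) hzne ht
  refine ⟨hv, fun t ht => by simpa using hclosed t ht, fun hIci => ?_⟩
  have hclosed_nonneg (t : ℝ) (ht : 0 ≤ t) := hclosed t (hIci ht)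
  simp only [add_tsub_cancel_right]
  refine iff_of_true (tendsto_zero_of_pow_mul_one_sub_mul_eq hm.ne' (by simp [*, hm.ne'])
    ((eventually_ge_atTop 0).mono hclosed_nonneg)) ?_
  rintro ⟨c, hc, hac⟩
  refine not_exists_pos_of_pow_mul_one_sub_mul_eq (pow_ne_zero m hz₀) hclosed_nonneg
    ⟨m * c, by positivity, ?_⟩
  rw [mul_assoc, hac, Complex.ofReal_mul, Complex.ofReal_natCast]

/-- Geodesics near an apparent singularity of order `μ > 1` with vanishing apparent
index: any solution of `z' = z^μ v`, `v' = 0` with `z(0) = z₀ ≠ 0`, `v(0) = v₀ ≠ 0`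
has `v ≡ v₀` and satisfies `z(t)^{μ−1}(1 − (μ−1)v₀z₀^{μ−1}t) = z₀^{μ−1}` (the branch
formula `z(t) = z₀(1−(μ−1)v₀z₀^{μ−1}t)^{−1/(μ−1)}`); if the solution is defined for
all `t ≥ 0` then `z(t) → 0` as `t → +∞` if and only if `v₀z₀^{μ−1} ∉ ℝ⁺`. -/
theorem apparent_singularity_order_gt_one (μ : ℕ) (hμ : 1 < μ)
    (z₀ v₀ : ℂ) (hz₀ : z₀ ≠ 0) (hv₀ : v₀ ≠ 0)
    (I : Set ℝ) (hIopen : IsOpen I) (hIconn : I.OrdConnected) (h0I : (0:ℝ) ∈ I)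
    (z v : ℝ → ℂ) (hz0 : z 0 = z₀) (hv0 : v 0 = v₀)
    (hzne : ∀ t ∈ I, z t ≠ 0)
    (hodez : ∀ t ∈ I, HasDerivAt z ((z t) ^ μ * v t) t)
    (hodev : ∀ t ∈ I, HasDerivAt v 0 t) :
    (∀ t ∈ I, v t = v₀) ∧
    (∀ t ∈ I, (z t) ^ (μ - 1) * (1 - (μ - 1 : ℂ) * v₀ * z₀ ^ (μ - 1) * t)
        = z₀ ^ (μ - 1)) ∧
    (Set.Ici (0:ℝ) ⊆ I →
      (Filter.Tendsto z Filter.atTop (nhds 0) ↔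
        ¬∃ c : ℝ, 0 < c ∧ v₀ * z₀ ^ (μ - 1) = (c : ℂ))) :=
  apparent_singularity_order_gt_one_general μ hμ z₀ v₀ hz₀ hv₀ I hIconn h0I z v hz0 hv0 hzne hodez
    hodev
end

section
/- For the vector field Q(z,w) = (−z², −(z²+zw)) on ℂ², the integral curve through a point (z₀,w₀) with z₀ ∉ ℝ converges to the origin as t → ±∞ tangentially to the direction [0:1], i.e. γ(t) → (0,0) and z(t)/w(t) → 0. -/
/-!
The first equation is the Riccati equation `z' = -z²`, solved by `z = ζ⁻¹` with `ζ(t) = z₀⁻¹ + t`;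
since `z₀⁻¹ ∉ ℝ`, `ζ` never vanishes and stays off the branch cut of `log`. Along this solution the
second equation is linear with first integral `ζ w + log ζ = K`, so `w = (K - log ζ) / ζ` and
`z / w = (K - log ζ)⁻¹`. As `t → ±∞` we have `ζ → ∞`, and everything tends to `0` because
`log ζ = o(ζ)` while `log ζ → ∞`.
-/

open Filter Topology Bornology Asymptotics Complex

namespace Complex

theorem tendsto_log_cobounded : Tendsto log (cobounded ℂ) (cobounded ℂ) := by
  rw [← tendsto_norm_atTop_iff_cobounded]
  refine tendsto_atTop_mono (fun ζ => ?_)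
    (Real.tendsto_log_atTop.comp tendsto_norm_cobounded_atTop)
  calc Real.log ‖ζ‖ ≤ |(log ζ).re| := by rw [log_re]; exact le_abs_self _
    _ ≤ ‖log ζ‖ := abs_re_le_norm _

theorem isLittleO_log_id_cobounded : log =o[cobounded ℂ] id := by
  have hre : (fun ζ : ℂ => (Real.log ‖ζ‖ : ℂ)) =o[cobounded ℂ] id := by
    rw [← isLittleO_norm_norm]
    simpa only [norm_real, Real.norm_eq_abs, Function.comp_def, id] using
      (Real.isLittleO_log_id_atTop.comp_tendsto tendsto_norm_cobounded_atTop).norm_left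
  have him : (fun ζ : ℂ => (arg ζ : ℂ) * I) =o[cobounded ℂ] id := by
    refine IsBigO.trans_isLittleO (g := fun _ => (1 : ℂ)) ?_ ?_
    · refine IsBigO.of_bound Real.pi (Eventually.of_forall fun ζ => ?_)
      simpa using abs_arg_le_pi ζ
    · exact isLittleO_const_left.mpr (Or.inr tendsto_norm_cobounded_atTop)
  exact (hre.add him).congr_left fun ζ => (log.eq_1 ζ).symm

theorem tendsto_const_sub_log_div_cobounded (K : ℂ) :
    Tendsto (fun ζ => (K - log ζ) / ζ) (cobounded ℂ) (𝓝 0) := by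
  have hK : Tendsto (fun ζ : ℂ => K / ζ) (cobounded ℂ) (𝓝 0) := by
    simpa [div_eq_mul_inv] using tendsto_inv₀_cobounded.const_mul K
  simpa [sub_div] using hK.sub isLittleO_log_id_cobounded.tendsto_div_nhds_zero

theorem const_add_ofReal_mem_slitPlane {c : ℂ} (hc : c.im ≠ 0) (t : ℝ) : c + t ∈ slitPlane :=
  mem_slitPlane_iff.mpr (Or.inr (by simpa using hc))

end Complex

theorem hasDerivAt_const_add_ofReal (c : ℂ) (t : ℝ) : HasDerivAt (fun s : ℝ => c + s) 1 t := by
  simpa using (hasDerivAt_id t).ofReal_comp.const_add c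

theorem eq_zero_of_hasDerivAt_mul_of_eq_zero {a f : ℝ → ℂ} (ha : Continuous a)
    (hf : ∀ t, HasDerivAt f (a t * f t) t) {t₀ : ℝ} (h₀ : f t₀ = 0) (t : ℝ) : f t = 0 := by
  have hg : ∀ t, HasDerivAt (fun s => f s * exp (-∫ r in t₀..s, a r)) 0 t := fun t =>
    ((hf t).mul (ha.integral_hasStrictDerivAt t₀ t).hasDerivAt.neg.cexp).congr_deriv (by ring)
  have := is_const_of_deriv_eq_zero (fun t => (hg t).differentiableAt) (fun t => (hg t).deriv) t t₀
  simpa [h₀, exp_ne_zero] using this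

theorem eq_inv_const_add_of_hasDerivAt_neg_sq {z : ℝ → ℂ} {c : ℂ} (hc : ∀ t : ℝ, c + t ≠ 0)
    (hz : ∀ t, HasDerivAt z (-z t ^ 2) t) {t₀ : ℝ} (h₀ : z t₀ = (c + t₀)⁻¹) (t : ℝ) :
    z t = (c + t)⁻¹ := by
  have hy (t : ℝ) : HasDerivAt (fun s : ℝ => (c + s)⁻¹) (-(c + t)⁻¹ ^ 2) t :=
    ((hasDerivAt_const_add_ofReal c t).inv (hc t)).congr_deriv (by field_simp)
  have hcont : Continuous fun t => -(z t + (c + t)⁻¹) :=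
    ((continuous_iff_continuousAt.mpr fun t => (hz t).continuousAt).add
      ((continuous_const.add continuous_ofReal).inv₀ hc)).neg
  -- the difference of two solutions of `u' = -u²` solves a linear equation
  have hdiff (t : ℝ) : HasDerivAt (fun s => z s - (c + s)⁻¹)
      (-(z t + (c + t)⁻¹) * (z t - (c + t)⁻¹)) t :=
    ((hz t).sub (hy t)).congr_deriv (by ring)
  exact sub_eq_zero.mp (eq_zero_of_hasDerivAt_mul_of_eq_zero hcont hdiff (sub_eq_zero.mpr h₀) t)

theorem const_add_mul_add_log_eq_of_hasDerivAt {w : ℝ → ℂ} {c : ℂ}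
    (hc : ∀ t : ℝ, c + t ∈ slitPlane)
    (hw : ∀ t : ℝ, HasDerivAt w (-((c + t)⁻¹ ^ 2 + (c + t)⁻¹ * w t)) t) (t t₀ : ℝ) :
    (c + t) * w t + log (c + t) = (c + t₀) * w t₀ + log (c + t₀) := by
  have hG (t : ℝ) : HasDerivAt (fun s : ℝ => (c + s) * w s + log (c + s)) 0 t := by
    refine (((hasDerivAt_const_add_ofReal c t).mul (hw t)).add
      ((hasDerivAt_log (hc t)).comp t (hasDerivAt_const_add_ofReal c t))).congr_deriv ?_
    field_simp [slitPlane_ne_zero (hc t)]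
    ring
  exact is_const_of_deriv_eq_zero (fun t => (hG t).differentiableAt) (fun t => (hG t).deriv) t t₀

theorem type_one_one_zero_dynamics_general (z₀ : ℂ) (hz₀ : z₀.im ≠ 0)
    (z w : ℝ → ℂ) (hz0 : z 0 = z₀)
    (hodez : ∀ t : ℝ, HasDerivAt z (-(z t) ^ 2) t)
    (hodew : ∀ t : ℝ, HasDerivAt w (-((z t) ^ 2 + z t * w t)) t) :
    Filter.Tendsto z Filter.atTop (nhds 0) ∧
    Filter.Tendsto w Filter.atTop (nhds 0) ∧
    Filter.Tendsto z Filter.atBot (nhds 0) ∧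
    Filter.Tendsto w Filter.atBot (nhds 0) ∧
    Filter.Tendsto (fun t => z t / w t) Filter.atTop (nhds 0) ∧
    Filter.Tendsto (fun t => z t / w t) Filter.atBot (nhds 0) := by
  set c := z₀⁻¹
  have hslit : ∀ t : ℝ, c + t ∈ slitPlane := const_add_ofReal_mem_slitPlane <| by
    simp [c, hz₀, show z₀ ≠ 0 by rintro rfl; simp at hz₀]
  have hne (t : ℝ) : c + t ≠ 0 := slitPlane_ne_zero (hslit t)
  have hz (t : ℝ) : z t = (c + t)⁻¹ :=
    eq_inv_const_add_of_hasDerivAt_neg_sq hne hodez (t₀ := 0) (by simp [c, hz0]) t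
  set K := c * w 0 + log c
  have hw (t : ℝ) : w t = (K - log (c + t)) / (c + t) := by
    have := const_add_mul_add_log_eq_of_hasDerivAt hslit (fun s => hz s ▸ hodew s) t 0
    simp only [ofReal_zero, add_zero] at this
    rw [eq_div_iff (hne t)]
    linear_combination this
  have hzw (t : ℝ) : z t / w t = (K - log (c + t))⁻¹ := by
    rw [hz, hw, div_div_eq_mul_div, inv_mul_cancel₀ (hne t), one_div]
  have hlim (l : Filter ℝ) (hl : Tendsto (fun t : ℝ => c + t) l (cobounded ℂ)) :
      Tendsto z l (𝓝 0) ∧ Tendsto w l (𝓝 0) ∧ Tendsto (fun t => z t / w t) l (𝓝 0) := by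
    rw [funext hzw, funext hz, funext hw]
    exact ⟨tendsto_inv₀_cobounded.comp hl, (tendsto_const_sub_log_div_cobounded K).comp hl,
      tendsto_inv₀_cobounded.comp <|
        (tendsto_const_sub_cobounded K).comp (tendsto_log_cobounded.comp hl)⟩
  obtain ⟨hz_top, hw_top, hzw_top⟩ :=
    hlim atTop ((tendsto_const_add_cobounded c).comp (RCLike.tendsto_ofReal_atTop_cobounded ℂ))
  obtain ⟨hz_bot, hw_bot, hzw_bot⟩ :=
    hlim atBot ((tendsto_const_add_cobounded c).comp (RCLike.tendsto_ofReal_atBot_cobounded ℂ))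
  exact ⟨hz_top, hw_top, hz_bot, hw_bot, hzw_top, hzw_bot⟩

/-- For the quadratic vector field `Q(z,w) = (−z², −(z²+zw))` on `ℂ²` (type
`(1₁₀)`), every integral curve through a point `(z₀,w₀)` with `z₀ ∉ ℝ` converges to
the origin as `t → ±∞` tangentially to the direction `[0:1]`: both components tend
to `0` and `z(t)/w(t) → 0`. -/
theorem type_one_one_zero_dynamics (z₀ w₀ : ℂ) (hz₀ : z₀.im ≠ 0)
    (z w : ℝ → ℂ) (hz0 : z 0 = z₀) (hw0 : w 0 = w₀)
    (hodez : ∀ t : ℝ, HasDerivAt z (-(z t) ^ 2) t)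
    (hodew : ∀ t : ℝ, HasDerivAt w (-((z t) ^ 2 + z t * w t)) t) :
    Filter.Tendsto z Filter.atTop (nhds 0) ∧
    Filter.Tendsto w Filter.atTop (nhds 0) ∧
    Filter.Tendsto z Filter.atBot (nhds 0) ∧
    Filter.Tendsto w Filter.atBot (nhds 0) ∧
    Filter.Tendsto (fun t => z t / w t) Filter.atTop (nhds 0) ∧
    Filter.Tendsto (fun t => z t / w t) Filter.atBot (nhds 0) :=
  type_one_one_zero_dynamics_general z₀ hz₀ z w hz0 hodez hodew
end

section
/- For the vector field Q(z,w) = (0, zw) on ℂ², the integral curve with initial condition (z₀,w₀) is γ(t) = (z₀, w₀ e^{z₀ t}); consequently if Re z₀ = 0 and z₀ ≠ 0, w₀ ≠ 0 then γ is a nonconstant periodic integral curve, so Q has periodic orbits accumulating at the origin as z₀ → 0 along the imaginary axis. -/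
/-!
The first coordinate of `Q(z,w) = (0, zw)` is constant along integral curves, so the second one
solves the linear equation `w' = z₀ w` and is `w₀ e^{z₀ t}`. When `z₀ = b i` is purely imaginary,
`t ↦ w₀ e^{i b t}` runs around the circle of radius `‖w₀‖` with period `2π / b`, so the curve stays
at sup-norm distance `max |b| ‖w₀‖` from the origin; taking `b = ‖w₀‖ = ε / 2` gives the orbits.
-/

open Complex Real

theorem hasDerivAt_cexp_mul_ofReal (a : ℂ) (t : ℝ) :
    HasDerivAt (fun s : ℝ => cexp (a * s)) (a * cexp (a * t)) t := by
  have h : HasDerivAt (fun w : ℂ => cexp (a * w)) (cexp (a * t) * (a * 1)) (t : ℂ) :=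
    ((hasDerivAt_id (t : ℂ)).const_mul a).cexp
  simpa [mul_comm] using h.comp_ofReal

theorem eq_mul_cexp_of_hasDerivAt {a : ℂ} {g : ℝ → ℂ} (hg : ∀ t, HasDerivAt g (a * g t) t)
    (t : ℝ) : g t = g 0 * cexp (a * t) := by
  set h : ℝ → ℂ := fun s => g s * cexp (-a * s)
  have hh : ∀ s, HasDerivAt h 0 s := fun s =>
    ((hg s).mul (hasDerivAt_cexp_mul_ofReal (-a) s)).congr_deriv (by ring)
  have hconst : h t = h 0 :=
    is_const_of_deriv_eq_zero (fun s => (hh s).differentiableAt) (fun s => (hh s).deriv) t 0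
  calc g t = h t * cexp (a * t) := by
        simp only [h, mul_assoc, ← Complex.exp_add, neg_mul, neg_add_cancel, Complex.exp_zero,
          mul_one]
    _ = h 0 * cexp (a * t) := by rw [hconst]
    _ = g 0 * cexp (a * t) := by simp [h]

namespace TypeTwoZeroZeroOne

def field (p : ℂ × ℂ) : ℂ × ℂ := (0, p.1 * p.2)

noncomputable def curve (z₀ w₀ : ℂ) (t : ℝ) : ℂ × ℂ := (z₀, w₀ * cexp (z₀ * t))

theorem hasDerivAt_curve (z₀ w₀ : ℂ) (t : ℝ) :
    HasDerivAt (curve z₀ w₀) (field (curve z₀ w₀ t)) t := by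
  refine ((hasDerivAt_const t z₀).prodMk
    ((hasDerivAt_cexp_mul_ofReal z₀ t).const_mul w₀)).congr_deriv ?_
  simp only [field, curve, mul_left_comm]

theorem eq_curve_of_hasDerivAt {f g : ℝ → ℂ} (hf : ∀ t, HasDerivAt f 0 t)
    (hg : ∀ t, HasDerivAt g (f t * g t) t) (t : ℝ) : (f t, g t) = curve (f 0) (g 0) t := by
  have hfc : ∀ s, f s = f 0 := fun s =>
    is_const_of_deriv_eq_zero (fun x => (hf x).differentiableAt) (fun x => (hf x).deriv) s 0
  have hg' : ∀ s, HasDerivAt g (f 0 * g s) s := fun s => hfc s ▸ hg s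
  rw [curve, hfc t, eq_mul_cexp_of_hasDerivAt hg' t]

variable {b : ℝ} (w₀ : ℂ)

theorem curve_periodic (hb : b ≠ 0) : Function.Periodic (curve (b * I) w₀) (2 * π / b) := by
  intro t
  have hshift : (b * I : ℂ) * ((t + 2 * π / b : ℝ) : ℂ) = b * I * t + 2 * π * I := by
    have : (b : ℂ) ≠ 0 := ofReal_ne_zero.mpr hb
    push_cast
    field_simp
  simp only [curve, hshift, Complex.exp_add, Complex.exp_two_pi_mul_I, mul_one]

theorem curve_half_period (hb : b ≠ 0) : curve (b * I) w₀ (π / b) = (b * I, -w₀) := by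
  have hhalf : (b * I : ℂ) * ((π / b : ℝ) : ℂ) = π * I := by
    have : (b : ℂ) ≠ 0 := ofReal_ne_zero.mpr hb
    push_cast
    field_simp
  rw [curve, hhalf, Complex.exp_pi_mul_I, mul_neg_one]

theorem curve_zero_ne_curve_half_period (hb : b ≠ 0) (hw₀ : w₀ ≠ 0) :
    curve (b * I) w₀ 0 ≠ curve (b * I) w₀ (π / b) := by
  rw [curve_half_period w₀ hb]
  simpa [curve, eq_comm (a := w₀), CharZero.neg_eq_self_iff] using hw₀

theorem norm_curve (t : ℝ) : ‖curve (b * I) w₀ t‖ = max |b| ‖w₀‖ := by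
  have hre : ((b * I : ℂ) * t).re = 0 := by simp
  simp [curve, Prod.norm_def, Complex.norm_exp, hre]

end TypeTwoZeroZeroOne

open TypeTwoZeroZeroOne in
/-- For the quadratic vector field `Q(z,w) = (0, zw)` on `ℂ²` (type `(2₀₀₁)`), the
integral curve with initial condition `(z₀,w₀)` is `γ(t) = (z₀, w₀e^{z₀t})`; as a
consequence `Q` has nonconstant periodic orbits accumulating at the origin:
for every `ε > 0` there is a nonconstant periodic integral curve contained in the
ball of radius `ε` about `0`. -/
theorem type_two_zero_zero_one_periodic_orbits :
    (∀ z₀ w₀ : ℂ, ∀ f g : ℝ → ℂ,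
      (∀ t : ℝ, HasDerivAt f 0 t) → (∀ t : ℝ, HasDerivAt g (f t * g t) t) →
      f 0 = z₀ → g 0 = w₀ →
      ∀ t : ℝ, f t = z₀ ∧ g t = w₀ * Complex.exp (z₀ * t)) ∧
    (∀ ε : ℝ, 0 < ε → ∃ γ : ℝ → ℂ × ℂ,
      (∀ t : ℝ, HasDerivAt γ (0, (γ t).1 * (γ t).2) t) ∧
      (∃ T : ℝ, 0 < T ∧ ∀ t : ℝ, γ (t + T) = γ t) ∧
      (∃ t₁ t₂ : ℝ, γ t₁ ≠ γ t₂) ∧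
      (∀ t : ℝ, ‖γ t‖ < ε)) := by
  refine ⟨fun z₀ w₀ f g hf hg hf0 hg0 t => ?_, fun ε hε => ?_⟩
  · simpa [curve, hf0, hg0] using eq_curve_of_hasDerivAt hf hg t
  have hb : 0 < ε / 2 := half_pos hε
  have hw₀ : ((ε / 2 : ℝ) : ℂ) ≠ 0 := ofReal_ne_zero.mpr hb.ne'
  refine ⟨curve (((ε / 2 : ℝ) : ℂ) * I) ((ε / 2 : ℝ) : ℂ), hasDerivAt_curve _ _,
    ⟨2 * π / (ε / 2), by positivity, curve_periodic _ hb.ne'⟩,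
    ⟨0, π / (ε / 2), curve_zero_ne_curve_half_period _ hb.ne' hw₀⟩, fun t => ?_⟩
  rw [norm_curve, Complex.norm_real, Real.norm_eq_abs, abs_of_pos hb, max_self]
  exact half_lt_self hε
end
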